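/- If A is unambiguous with a single final state q_F, then the multiset of paths enumerated by getAllPaths at node (v', q_F) (after BFS with predecessor lists on G× from (v,q₀)) is exactly the set of shortest paths from v to v' in G among paths with label in L(A), each occurring once. -/

import Mathlib

/-- A graph database: edges with source, target, and label. -/
structure GraphDB (V E S : Type) where
  src : E → V
  tgt : E → V
  lab : E → S

/-- An NFA with transition relation `δ ⊆ Q × Σ × Q`, initial state `q0`, final states `F`. -/
structure NFAx (Q S : Type) where
  δ : Set (Q × S × Q)
  q0 : Q
  F : Set Q

/-- `A.Run q w q'`: the automaton can read word `w` going from state `q` to state `q'`. -/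
inductive NFAx.Run {Q S : Type} (A : NFAx Q S) : Q → List S → Q → Prop
  | nil (q : Q) : A.Run q [] q
  | cons {q q' q'' : Q} {a : S} {w : List S} :
      (q, a, q') ∈ A.δ → A.Run q' w q'' → A.Run q (a :: w) q''

/-- The language accepted by the NFA. -/
def NFAx.Lang {Q S : Type} (A : NFAx Q S) : Set (List S) :=
  {w | ∃ qf ∈ A.F, A.Run A.q0 w qf}

/-- `G.IsWalk v es w`: the edge list `es` forms a walk from `v` to `w` in `G`. -/
def GraphDB.IsWalk {V E S : Type} (G : GraphDB V E S) : V → List E → V → Prop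
  | v, [], w => v = w
  | v, e :: es, w => G.src e = v ∧ G.IsWalk (G.tgt e) es w

/-- Distance (minimum number of edges over all walks), `⊤` if unreachable. -/
noncomputable def GraphDB.dist {V E S : Type} (G : GraphDB V E S) (v w : V) : ℕ∞ :=
  sInf {n : ℕ∞ | ∃ es : List E, G.IsWalk v es w ∧ (es.length : ℕ∞) = n}

/-- Edges of the product graph: pairs of a `G`-edge and a compatible transition. -/
def ProdE {V E Q S : Type} (G : GraphDB V E S) (A : NFAx Q S) : Type :=
  {p : E × Q × S × Q // p.2 ∈ A.δ ∧ G.lab p.1 = p.2.2.1}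

/-- The product graph `G×` of a graph database `G` and an NFA `A`. -/
def ProdGraph {V E Q S : Type} (G : GraphDB V E S) (A : NFAx Q S) :
    GraphDB (V × Q) (ProdE G A) S where
  src p := (G.src p.1.1, p.1.2.1)
  tgt p := (G.tgt p.1.1, p.1.2.2.2)
  lab p := G.lab p.1.1

/-- Projection of a product-graph edge to the underlying `G`-edge. -/
def projE {V E Q S : Type} {G : GraphDB V E S} {A : NFAx Q S} (p : ProdE G A) : E := p.1.1

/-- `A.RunStates q w qs qf`: `qs` is the full state sequence of a run on `w` from `q` to `qf`. -/
inductive NFAx.RunStates {Q S : Type} (A : NFAx Q S) : Q → List S → List Q → Q → Prop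
  | nil (q : Q) : A.RunStates q [] [q] q
  | cons {q q' qf : Q} {a : S} {w : List S} {qs : List Q} :
      (q, a, q') ∈ A.δ → A.RunStates q' w qs qf → A.RunStates q (a :: w) (q :: qs) qf

/-- `A` is unambiguous: every accepted word has exactly one accepting run (state sequence). -/
def NFAx.Unambiguous {Q S : Type} (A : NFAx Q S) : Prop :=
  ∀ (w : List S) (qs₁ qs₂ : List Q) (q₁ q₂ : Q), q₁ ∈ A.F → q₂ ∈ A.F →
    A.RunStates A.q0 w qs₁ q₁ → A.RunStates A.q0 w qs₂ q₂ → qs₁ = qs₂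

/-- `getAllPaths`: backtracking enumeration of all paths (as edge lists) from `s` to a node,
following the predecessor lists, with fuel. -/
def allPaths {V E : Type} [DecidableEq V] (prevList : V → List (V × E)) (s : V) :
    ℕ → V → List (List E)
  | 0, _ => []
  | fuel + 1, u =>
      if u = s then [[]]
      else ((prevList u).map
        (fun p => (allPaths prevList s fuel p.1).map (fun es => es ++ [p.2]))).flatten

/-!
A walk of `G×` is a walk of `G` together with a run of `A` on its label, and an accepted word has
only one run, so projecting to `G` is a length-preserving bijection from the walks of `G×` from
`(v, q₀)` to `(v', q_F)` onto the walks of `G` from `v` to `v'` labelled in `L(A)`; in particular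
the distance in `G×` is the length of a shortest such walk of `G`. A walk from the source is
shortest iff each of its edges leaves a vertex one step closer to the source than the vertex it
enters, i.e. iff it is assembled from predecessor-list entries; so `allPaths` lists exactly the
shortest walks, each once because the last edge of a walk fixes the entry it comes from.
-/

namespace GraphDB

variable {W E S : Type}

def walkTarget (H : GraphDB W E S) : W → List E → W
  | v, [] => v
  | _, e :: es => H.walkTarget (H.tgt e) es

def IsBFSPredecessors [DecidableEq W] (H : GraphDB W E S) (s : W)
    (prevList : W → List (W × E)) : Prop :=
  ∀ x : W, x ≠ s → ∀ p : W × E, p ∈ prevList x ↔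
    (H.src p.2 = p.1 ∧ H.tgt p.2 = x ∧ H.dist s p.1 + 1 = H.dist s x)

variable {H : GraphDB W E S}

theorem isWalk_append_iff {v w : W} {es₁ es₂ : List E} :
    H.IsWalk v (es₁ ++ es₂) w ↔ ∃ u, H.IsWalk v es₁ u ∧ H.IsWalk u es₂ w := by
  induction es₁ generalizing v with
  | nil => simp [IsWalk]
  | cons e es ih => simp [IsWalk, ih, and_assoc]

theorem isWalk_append_singleton_iff {v w : W} {es : List E} {e : E} :
    H.IsWalk v (es ++ [e]) w ↔ H.IsWalk v es (H.src e) ∧ H.tgt e = w := by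
  simp [isWalk_append_iff, IsWalk]

theorem IsWalk.eq_walkTarget {v w : W} {es : List E} (h : H.IsWalk v es w) :
    w = H.walkTarget v es := by
  induction es generalizing v with
  | nil => exact h.symm
  | cons e es ih => exact ih h.2

theorem IsWalk.take_drop {v w : W} {es : List E} (h : H.IsWalk v es w) (n : ℕ) :
    H.IsWalk v (es.take n) (H.walkTarget v (es.take n)) ∧
      H.IsWalk (H.walkTarget v (es.take n)) (es.drop n) w := by
  rw [← List.take_append_drop n es, isWalk_append_iff] at h
  obtain ⟨u, hu, hu'⟩ := h
  obtain rfl := hu.eq_walkTarget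
  exact ⟨hu, hu'⟩

theorem IsWalk.exists_length_lt_card [Fintype W] {v w : W} {es : List E}
    (h : H.IsWalk v es w) :
    ∃ es' : List E, H.IsWalk v es' w ∧ es'.length < Fintype.card W := by
  induction hn : es.length using Nat.strong_induction_on generalizing es with
  | _ n ih =>
  by_cases hlt : n < Fintype.card W
  · exact ⟨es, h, hn ▸ hlt⟩
  obtain ⟨i, j, hij, hij'⟩ := Fintype.exists_ne_map_eq_of_card_lt
    (fun i : Fin (n + 1) => H.walkTarget v (es.take i)) (by simp only [Fintype.card_fin]; omega)
  wlog hlt' : i < j generalizing i j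
  · exact this j i hij.symm hij'.symm (lt_of_le_of_ne (not_lt.1 hlt') hij.symm)
  have hcut : H.IsWalk v (es.take i ++ es.drop j) w := by
    refine isWalk_append_iff.2 ⟨_, (h.take_drop i).1, ?_⟩
    rw [hij']
    exact (h.take_drop j).2
  have hj : (j : ℕ) ≤ n := Nat.lt_succ_iff.1 j.2
  refine ih _ ?_ hcut rfl
  simp only [List.length_append, List.length_take, List.length_drop]
  omega

theorem IsWalk.dist_le {v w : W} {es : List E} (h : H.IsWalk v es w) :
    H.dist v w ≤ es.length :=
  sInf_le ⟨es, h, rfl⟩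

theorem exists_isWalk_length_eq_of_dist_eq {v w : W} {d : ℕ} (h : H.dist v w = d) :
    ∃ es : List E, H.IsWalk v es w ∧ es.length = d := by
  have hne : {n : ℕ∞ | ∃ es : List E, H.IsWalk v es w ∧ (es.length : ℕ∞) = n}.Nonempty := by
    by_contra hemp
    rw [Set.not_nonempty_iff_eq_empty] at hemp
    simp [dist, hemp] at h
  obtain ⟨es, hes, hlen⟩ := csInf_mem hne
  exact ⟨es, hes, by exact_mod_cast hlen.trans h⟩

theorem eq_of_dist_eq_zero {v w : W} (h : H.dist v w = 0) : v = w := by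
  obtain ⟨es, hes, hlen⟩ := exists_isWalk_length_eq_of_dist_eq (d := 0) (by simpa using h)
  rw [List.length_eq_zero_iff] at hlen
  subst hlen
  exact hes

theorem exists_dist_eq_lt_card [Fintype W] {v w : W} {es : List E} (h : H.IsWalk v es w) :
    ∃ d : ℕ, H.dist v w = d ∧ d < Fintype.card W := by
  obtain ⟨es', hes', hlt⟩ := h.exists_length_lt_card
  have hle := hes'.dist_le
  obtain ⟨d, hd⟩ := ENat.ne_top_iff_exists.1 (ne_top_of_le_ne_top (ENat.natCast_ne_top _) hle)
  rw [← hd, Nat.cast_le] at hle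
  exact ⟨d, hd.symm, hle.trans_lt hlt⟩

theorem dist_tgt_le_dist_src_add_one (s : W) (e : E) :
    H.dist s (H.tgt e) ≤ H.dist s (H.src e) + 1 := by
  cases hd : H.dist s (H.src e) using ENat.recTopCoe with
  | top => simp
  | coe d =>
    obtain ⟨es, hes, rfl⟩ := exists_isWalk_length_eq_of_dist_eq hd
    simpa using (isWalk_append_singleton_iff.2 ⟨hes, rfl⟩).dist_le

theorem dist_src_eq_of_isWalk_append_singleton {s u : W} {es : List E} {e : E}
    (h : H.IsWalk s (es ++ [e]) u) (hd : H.dist s u = es.length + 1) :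
    H.dist s (H.src e) = es.length := by
  obtain ⟨hes, rfl⟩ := isWalk_append_singleton_iff.1 h
  refine le_antisymm hes.dist_le ?_
  rw [← ENat.add_le_add_iff_right ENat.one_ne_top, ← hd]
  exact dist_tgt_le_dist_src_add_one s e

theorem IsBFSPredecessors.dist_fst_eq [DecidableEq W] {s : W} {prevList : W → List (W × E)}
    (hP : H.IsBFSPredecessors s prevList) {u : W} (hu : u ≠ s) {d : ℕ}
    (hd : H.dist s u = d + 1) {p : W × E} (hp : p ∈ prevList u) : H.dist s p.1 = d :=
  WithTop.add_right_cancel ENat.one_ne_top (((hP u hu p).1 hp).2.2.trans hd)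

end GraphDB

section allPaths

open GraphDB

variable {W E S : Type} [DecidableEq W] {H : GraphDB W E S} {s : W}
  {prevList : W → List (W × E)}

theorem mem_allPaths_iff (hP : H.IsBFSPredecessors s prevList) {fuel : ℕ} {u : W} {d : ℕ}
    (hd : H.dist s u = d) (hfuel : d < fuel) {es : List E} :
    es ∈ allPaths prevList s fuel u ↔ H.IsWalk s es u ∧ es.length = d := by
  induction fuel generalizing u d es with
  | zero => omega
  | succ fuel ih =>
    by_cases hu : u = s
    · subst hu
      obtain rfl : d = 0 :=
        Nat.le_zero.1 (by exact_mod_cast hd.symm.trans_le (IsWalk.dist_le (es := []) rfl))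
      rw [allPaths, if_pos rfl, List.mem_singleton, List.length_eq_zero_iff]
      exact ⟨fun h => ⟨h ▸ rfl, h⟩, And.right⟩
    obtain _ | d := d
    · exact absurd (GraphDB.eq_of_dist_eq_zero (by rw [hd, Nat.cast_zero])).symm hu
    rw [Nat.cast_succ] at hd
    rw [allPaths, if_neg hu, List.mem_flatten]
    simp only [List.mem_map, exists_exists_and_eq_and]
    constructor
    · rintro ⟨p, hp, es', hes', rfl⟩
      obtain ⟨hsrc, htgt, -⟩ := (hP u hu p).1 hp
      obtain ⟨hw, hlen⟩ := (ih (hP.dist_fst_eq hu hd hp) (by omega)).1 hes'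
      exact ⟨isWalk_append_singleton_iff.2 ⟨hsrc ▸ hw, htgt⟩, by simp [hlen]⟩
    · rintro ⟨hw, hlen⟩
      obtain ⟨es', e, rfl⟩ := es.eq_nil_or_concat'.resolve_left (by rintro rfl; simp at hlen)
      have hlen' : es'.length = d := by simpa using hlen
      obtain ⟨hw', htgt⟩ := isWalk_append_singleton_iff.1 hw
      have hdsrc := dist_src_eq_of_isWalk_append_singleton hw (by rw [hd, hlen'])
      rw [hlen'] at hdsrc
      have hp : (H.src e, e) ∈ prevList u := (hP u hu _).2 ⟨rfl, htgt, by rw [hdsrc, hd]⟩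
      exact ⟨_, hp, es', (ih hdsrc (by omega)).2 ⟨hw', hlen'⟩, rfl⟩

theorem nodup_allPaths (hP : H.IsBFSPredecessors s prevList) (hnd : ∀ x, (prevList x).Nodup)
    {fuel : ℕ} {u : W} {d : ℕ} (hd : H.dist s u = d) (hfuel : d < fuel) :
    (allPaths prevList s fuel u).Nodup := by
  induction fuel generalizing u d with
  | zero => omega
  | succ fuel ih =>
    by_cases hu : u = s
    · rw [allPaths, if_pos hu]
      exact List.nodup_singleton _
    obtain _ | d := d
    · exact absurd (GraphDB.eq_of_dist_eq_zero (by rw [hd, Nat.cast_zero])).symm hu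
    rw [Nat.cast_succ] at hd
    rw [allPaths, if_neg hu, List.nodup_flatten, List.pairwise_map]
    constructor
    · intro l hl
      obtain ⟨p, hp, rfl⟩ := List.mem_map.1 hl
      exact (ih (hP.dist_fst_eq hu hd hp) (by omega)).map (List.append_left_injective _)
    · refine List.Pairwise.imp_of_mem ?_ (hnd u)
      intro p q hp hq hpq es hes₁ hes₂
      obtain ⟨es₁, -, rfl⟩ := List.mem_map.1 hes₁
      obtain ⟨es₂, -, heq⟩ := List.mem_map.1 hes₂
      have he : q.2 = p.2 := List.singleton_inj.1 (List.append_inj' heq rfl).2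
      -- an entry of a predecessor list is determined by its edge
      exact hpq (Prod.ext (by rw [← ((hP u hu p).1 hp).1, ← ((hP u hu q).1 hq).1, he]) he.symm)

end allPaths

theorem NFAx.RunStates.run {Q S : Type} {A : NFAx Q S} {q q' : Q} {w : List S} {qs : List Q}
    (h : A.RunStates q w qs q') : A.Run q w q' := by
  induction h with
  | nil q => exact .nil q
  | cons hδ _ ih => exact .cons hδ ih

theorem NFAx.mem_lang_iff_of_F_eq_singleton {Q S : Type} {A : NFAx Q S} {qF : Q}
    (hF : A.F = {qF}) {w : List S} : w ∈ A.Lang ↔ A.Run A.q0 w qF := by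
  simp [NFAx.Lang, hF]

def ProdE.tgtState {V E Q S : Type} {G : GraphDB V E S} {A : NFAx Q S} (p : ProdE G A) : Q :=
  p.1.2.2.2

namespace ProdGraph

variable {V E Q S : Type} {G : GraphDB V E S} {A : NFAx Q S}

theorem isWalk_and_runStates_of_isWalk {v v' : V} {q q' : Q} {pes : List (ProdE G A)}
    (h : (ProdGraph G A).IsWalk (v, q) pes (v', q')) :
    G.IsWalk v (pes.map projE) v' ∧
      A.RunStates q ((pes.map projE).map G.lab) (q :: pes.map ProdE.tgtState) q' := by
  induction pes generalizing v q with
  | nil =>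
    obtain ⟨rfl, rfl⟩ := Prod.mk.inj h
    exact ⟨rfl, .nil q⟩
  | cons p pes ih =>
    obtain ⟨⟨e, q₁, a, q₂⟩, hδ, rfl : G.lab e = a⟩ := p
    obtain ⟨hsrc, hrest⟩ := h
    obtain ⟨hv, rfl⟩ := Prod.mk.inj hsrc
    obtain ⟨hw, hr⟩ := ih hrest
    exact ⟨⟨hv, hw⟩, .cons hδ hr⟩

theorem exists_isWalk_map_projE_eq {v v' : V} {q q' : Q} {es : List E}
    (hw : G.IsWalk v es v') (hr : A.Run q (es.map G.lab) q') :
    ∃ pes : List (ProdE G A), (ProdGraph G A).IsWalk (v, q) pes (v', q') ∧ pes.map projE = es := by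
  induction es generalizing v q with
  | nil =>
    cases hr
    exact ⟨[], Prod.ext hw rfl, rfl⟩
  | cons e es ih =>
    obtain ⟨hsrc, hrest⟩ := hw
    obtain _ | ⟨hδ, hr'⟩ := hr
    obtain ⟨pes, hpw, rfl⟩ := ih hrest hr'
    exact ⟨⟨(e, q, G.lab e, _), hδ, rfl⟩ :: pes, ⟨Prod.ext hsrc rfl, hpw⟩, rfl⟩

theorem exists_isWalk_map_projE_eq_iff {v v' : V} {q q' : Q} {es : List E} :
    (∃ pes : List (ProdE G A), (ProdGraph G A).IsWalk (v, q) pes (v', q') ∧ pes.map projE = es) ↔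
      G.IsWalk v es v' ∧ A.Run q (es.map G.lab) q' := by
  refine ⟨?_, fun h => exists_isWalk_map_projE_eq h.1 h.2⟩
  rintro ⟨pes, hpw, rfl⟩
  obtain ⟨hw, hr⟩ := isWalk_and_runStates_of_isWalk hpw
  exact ⟨hw, hr.run⟩

theorem eq_of_map_projE_eq_of_map_tgtState_eq {v₁ v₂ : V} {q : Q} {x₁ x₂ : V × Q}
    {pes₁ pes₂ : List (ProdE G A)} (h₁ : (ProdGraph G A).IsWalk (v₁, q) pes₁ x₁)
    (h₂ : (ProdGraph G A).IsWalk (v₂, q) pes₂ x₂) (he : pes₁.map projE = pes₂.map projE)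
    (hs : pes₁.map ProdE.tgtState = pes₂.map ProdE.tgtState) : pes₁ = pes₂ := by
  induction pes₁ generalizing pes₂ v₁ v₂ q with
  | nil => exact (List.map_eq_nil_iff.1 he.symm).symm
  | cons p pes ih =>
    obtain _ | ⟨p', pes'⟩ := pes₂
    · simp at he
    simp only [List.map_cons, List.cons.injEq] at he hs
    have hp : p = p' := by
      have hsrc : p.1.2.1 = p'.1.2.1 := (congrArg Prod.snd h₁.1).trans (congrArg Prod.snd h₂.1).symm
      -- the label of a product edge is that of its `G`-edge
      have hlab : p.1.2.2.1 = p'.1.2.2.1 := by rw [← p.2.2, ← p'.2.2]; exact congrArg G.lab he.1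
      exact Subtype.ext (Prod.ext he.1 (Prod.ext hsrc (Prod.ext hlab hs.1)))
    subst hp
    rw [ih h₁.2 h₂.2 he.2 hs.2]

theorem eq_of_map_projE_eq (hU : A.Unambiguous) {v v₁ v₂ : V} {q₁ q₂ : Q} (hq₁ : q₁ ∈ A.F)
    (hq₂ : q₂ ∈ A.F) {pes₁ pes₂ : List (ProdE G A)}
    (h₁ : (ProdGraph G A).IsWalk (v, A.q0) pes₁ (v₁, q₁))
    (h₂ : (ProdGraph G A).IsWalk (v, A.q0) pes₂ (v₂, q₂))
    (he : pes₁.map projE = pes₂.map projE) : pes₁ = pes₂ := by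
  have hr₁ := (isWalk_and_runStates_of_isWalk h₁).2
  have hr₂ := (isWalk_and_runStates_of_isWalk h₂).2
  rw [he] at hr₁
  exact eq_of_map_projE_eq_of_map_tgtState_eq h₁ h₂ he
    (List.cons_inj_right _ |>.1 (hU _ _ _ _ _ hq₁ hq₂ hr₁ hr₂))

theorem dist_eq_sInf {qF : Q} (hF : A.F = {qF}) (v v' : V) :
    (ProdGraph G A).dist (v, A.q0) (v', qF) = sInf {m : ℕ∞ | ∃ es : List E,
      G.IsWalk v es v' ∧ es.map G.lab ∈ A.Lang ∧ (es.length : ℕ∞) = m} := by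
  simp only [NFAx.mem_lang_iff_of_F_eq_singleton hF]
  refine congrArg sInf (Set.ext fun m => ⟨?_, ?_⟩)
  · rintro ⟨pes, hpw, rfl⟩
    obtain ⟨hw, hr⟩ := exists_isWalk_map_projE_eq_iff.1 ⟨pes, hpw, rfl⟩
    exact ⟨_, hw, hr, congrArg _ (List.length_map _)⟩
  · rintro ⟨es, hw, hr, rfl⟩
    obtain ⟨pes, hpw, rfl⟩ := exists_isWalk_map_projE_eq hw hr
    exact ⟨pes, hpw, congrArg _ (List.length_map _).symm⟩

end ProdGraph

/-- for `A` unambiguous with single final state `q_F`, after BFS with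
predecessor lists on `G×` from `(v,q₀)`, the paths enumerated by `getAllPaths` at `(v',q_F)`,
projected to `G`, are exactly the shortest paths from `v` to `v'` among paths with label in
`L(A)`, each occurring once. -/
theorem allShortest_correct {V E Q S : Type} [DecidableEq V] [DecidableEq Q]
    [Fintype V] [Fintype Q] (G : GraphDB V E S) (A : NFAx Q S) (qF : Q)
    (hF : A.F = {qF}) (hU : A.Unambiguous) (v v' : V)
    (prevList : V × Q → List ((V × Q) × ProdE G A))
    (hinv : ∀ x : V × Q, x ≠ (v, A.q0) → ∀ p : (V × Q) × ProdE G A, p ∈ prevList x ↔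
      ((ProdGraph G A).src p.2 = p.1 ∧ (ProdGraph G A).tgt p.2 = x ∧
        (ProdGraph G A).dist (v, A.q0) p.1 + 1 = (ProdGraph G A).dist (v, A.q0) x))
    (hnd : ∀ x : V × Q, (prevList x).Nodup)
    (hreach : ∃ es : List (ProdE G A), (ProdGraph G A).IsWalk (v, A.q0) es (v', qF)) :
    ((allPaths prevList (v, A.q0) (Fintype.card (V × Q) + 1) (v', qF)).map
        (List.map projE)).Nodup ∧
    ∀ p : List E,
      p ∈ (allPaths prevList (v, A.q0) (Fintype.card (V × Q) + 1) (v', qF)).map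
        (List.map projE) ↔
      (G.IsWalk v p v' ∧ p.map G.lab ∈ A.Lang ∧
        (p.length : ℕ∞) = sInf {m : ℕ∞ | ∃ es : List E, G.IsWalk v es v' ∧
          es.map G.lab ∈ A.Lang ∧ (es.length : ℕ∞) = m}) := by
  obtain ⟨es, hes⟩ := hreach
  obtain ⟨d, hd, hdlt⟩ := GraphDB.exists_dist_eq_lt_card hes
  have hfuel : d < Fintype.card (V × Q) + 1 := Nat.lt_succ_of_lt hdlt
  have hmem (pes : List (ProdE G A)) := mem_allPaths_iff (es := pes) hinv hd hfuel
  have hqF : qF ∈ A.F := hF ▸ rfl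
  refine ⟨(nodup_allPaths hinv hnd hd hfuel).map_on fun pes₁ h₁ pes₂ h₂ =>
    ProdGraph.eq_of_map_projE_eq hU hqF hqF ((hmem pes₁).1 h₁).1 ((hmem pes₂).1 h₂).1, fun p => ?_⟩
  rw [← ProdGraph.dist_eq_sInf hF, hd, List.mem_map, NFAx.mem_lang_iff_of_F_eq_singleton hF,
    ← and_assoc, ← ProdGraph.exists_isWalk_map_projE_eq_iff]
  constructor
  · rintro ⟨pes, hpes, rfl⟩
    obtain ⟨hpw, hlen⟩ := (hmem pes).1 hpes
    exact ⟨⟨pes, hpw, rfl⟩, by simp [hlen]⟩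
  · rintro ⟨⟨pes, hpw, rfl⟩, hlen⟩
    exact ⟨pes, (hmem pes).2 ⟨hpw, by simpa using hlen⟩, rfl⟩
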